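/- arXiv:2211.15172 — 4 statements merged into one kernel-verified Lean document; each statement's English description precedes it below -/
import Mathlib

section
/- A Hermitian matrix A of trace 1 lies in the convex hull of the set {P Hermitian : P·P = P, tr(P) = 1} if and only if A is positive semidefinite. -/
/-!
Hermitian idempotents are positive semidefinite, and positive semidefinite matrices form a convex
set, so the convex hull consists of positive semidefinite matrices. Conversely, the spectral
theorem writes a positive semidefinite `A` as `∑ λᵢ Pᵢ`, where `Pᵢ` is the unitary conjugate of the
diagonal unit `Eᵢᵢ` (a trace-one Hermitian idempotent) and the eigenvalues `λᵢ ≥ 0` sum to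
`tr A = 1`.
-/

open Unitary
open scoped ComplexOrder

namespace Matrix

theorem IsHermitian.posSemidef_of_mul_self_eq {n R : Type*} [Fintype n] [Ring R] [PartialOrder R]
    [StarRing R] [StarOrderedRing R] {P : Matrix n n R} (hP : P.IsHermitian) (hPP : P * P = P) :
    P.PosSemidef := by
  simpa only [hP.eq, hPP] using posSemidef_conjTranspose_mul_self P

variable {n 𝕜 : Type*} [RCLike 𝕜]

theorem convex_setOf_posSemidef : Convex ℝ {A : Matrix n n 𝕜 | A.PosSemidef} :=
  fun _ hA _ hB _ _ ha hb _ => (hA.smul ha).add (hB.smul hb)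

variable [Fintype n]

variable (n 𝕜) in
def traceOneProjections : Set (Matrix n n 𝕜) :=
  {P | P.IsHermitian ∧ P * P = P ∧ P.trace = 1}

theorem convexHull_traceOneProjections_subset :
    convexHull ℝ (traceOneProjections n 𝕜) ⊆ {A | A.PosSemidef} :=
  convexHull_min (fun _ ⟨hP, hPP, _⟩ => hP.posSemidef_of_mul_self_eq hPP) convex_setOf_posSemidef

variable [DecidableEq n]

theorem single_mem_traceOneProjections (i : n) :
    single i i (1 : 𝕜) ∈ traceOneProjections n 𝕜 :=
  ⟨by simp [IsHermitian], by simp, by simp⟩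

theorem conjStarAlgAut_mem_traceOneProjections (U : unitary (Matrix n n 𝕜))
    {P : Matrix n n 𝕜} (hP : P ∈ traceOneProjections n 𝕜) :
    conjStarAlgAut 𝕜 _ U P ∈ traceOneProjections n 𝕜 := by
  obtain ⟨hPh, hPP, htr⟩ := hP
  refine ⟨?_, by rw [← map_mul, hPP], ?_⟩
  · rw [isHermitian_iff_isSelfAdjoint] at hPh ⊢
    exact hPh.map _
  · rw [conjStarAlgAut_apply, trace_mul_cycle, coe_star_mul_self, one_mul, htr]

theorem IsHermitian.eq_sum_eigenvalues_smul {A : Matrix n n 𝕜} (hA : A.IsHermitian) :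
    A = ∑ i, hA.eigenvalues i • conjStarAlgAut 𝕜 _ hA.eigenvectorUnitary (single i i 1) := by
  conv_lhs => rw [hA.spectral_theorem, ← sum_single_eq_diagonal, map_sum]
  refine Finset.sum_congr rfl fun i _ => ?_
  rw [Function.comp_apply, RCLike.real_smul_eq_coe_smul (K := 𝕜), ← map_smul, smul_single,
    smul_eq_mul, mul_one]

theorem PosSemidef.mem_convexHull_traceOneProjections {A : Matrix n n 𝕜} (hA : A.PosSemidef)
    (htr : A.trace = 1) : A ∈ convexHull ℝ (traceOneProjections n 𝕜) := by
  have hsum : ∑ i, hA.isHermitian.eigenvalues i = 1 := by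
    exact_mod_cast hA.isHermitian.trace_eq_sum_eigenvalues.symm.trans htr
  rw [hA.isHermitian.eq_sum_eigenvalues_smul]
  exact (convex_convexHull ℝ _).sum_mem (fun i _ => hA.eigenvalues_nonneg i) hsum
    fun i _ => subset_convexHull ℝ _ <|
      conjStarAlgAut_mem_traceOneProjections _ (single_mem_traceOneProjections i)

end Matrix

open Matrix in
open scoped ComplexOrder in
theorem stmt_2_general (n : ℕ) (A : Matrix (Fin (n+1)) (Fin (n+1)) ℂ)
    (htr : A.trace = 1) :
    A ∈ convexHull ℝ
        {P : Matrix (Fin (n+1)) (Fin (n+1)) ℂ | P.IsHermitian ∧ P * P = P ∧ P.trace = 1}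
      ↔ A.PosSemidef :=
  ⟨fun h => convexHull_traceOneProjections_subset h,
    fun h => h.mem_convexHull_traceOneProjections htr⟩

open Matrix in
open scoped ComplexOrder in
theorem stmt_2 (n : ℕ) (A : Matrix (Fin (n+1)) (Fin (n+1)) ℂ)
    (hA : A.IsHermitian) (htr : A.trace = 1) :
    A ∈ convexHull ℝ
        {P : Matrix (Fin (n+1)) (Fin (n+1)) ℂ | P.IsHermitian ∧ P * P = P ∧ P.trace = 1}
      ↔ A.PosSemidef :=
  stmt_2_general n A htr
end

section
/- For the rational function F(a) = 8πd·(1 + (2a²δ − c)/((2a−1)² + c)) with d > 0, 0 < c < 1 and δ > 0, F attains its global minimum at some a_min with 0 < a_min < 1/2; in particular F′(0) < 0 and F′(1/2) > 0. -/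
/-!
`F = 8πd (1 + R)` with `R = quadRatio δ c`. For a level `m` with
`2m < δ`, the inequality `m ≤ R a` is the nonnegativity of a quadratic in `a` with positive
leading coefficient. Choosing `m < 0` as a root of `2c m² - (δ(1 + c) - 2c) m - δc`, which
makes that quadratic's discriminant vanish, it becomes `((δ - 2m) a + m)² ≥ 0`, with equality at
`a = -m / (δ - 2m) ∈ (0, 1/2)`. The signs of the derivatives are read off the quotient rule.
-/

open Real

noncomputable def quadRatio (δ c a : ℝ) : ℝ := (2 * a ^ 2 * δ - c) / ((2 * a - 1) ^ 2 + c)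

theorem exists_neg_root_of_quadratic {p q r : ℝ} (hp : 0 < p) (hr : 0 < r) :
    ∃ m < 0, p * m ^ 2 + q * m = r := by
  have hdisc : 0 < q ^ 2 + 4 * p * r := by positivity
  set s := √(q ^ 2 + 4 * p * r)
  have hs2 : s ^ 2 = q ^ 2 + 4 * p * r := sq_sqrt hdisc.le
  have hqs : |q| < s := lt_of_pow_lt_pow_left₀ 2 (sqrt_nonneg _) (by rw [sq_abs]; nlinarith)
  refine ⟨(-q - s) / (2 * p), div_neg_of_neg_of_pos (by linarith [neg_abs_le q]) (by positivity),
    ?_⟩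
  field_simp
  linear_combination hs2

section

variable {δ c m : ℝ}

theorem quadRatio_denom_pos (hc : 0 < c) (a : ℝ) : 0 < (2 * a - 1) ^ 2 + c := by
  positivity

theorem le_quadRatio (hc : 0 < c) (hm : 2 * m < δ)
    (hroot : 2 * c * m ^ 2 - (δ * (1 + c) - 2 * c) * m = δ * c) (a : ℝ) :
    m ≤ quadRatio δ c a := by
  rw [quadRatio, le_div_iff₀ (quadRatio_denom_pos hc a)]
  have hlead : 0 < δ - 2 * m := by linarith
  -- the root equation turns `(δ - 2m) · (numerator - m · denominator)` into a perfect square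
  have hsq : (δ - 2 * m) * (2 * a ^ 2 * δ - c - m * ((2 * a - 1) ^ 2 + c))
      = 2 * ((δ - 2 * m) * a + m) ^ 2 := by
    linear_combination hroot
  nlinarith [sq_nonneg ((δ - 2 * m) * a + m)]

theorem quadRatio_eq_of_root (hc : 0 < c) (hm : 2 * m < δ)
    (hroot : 2 * c * m ^ 2 - (δ * (1 + c) - 2 * c) * m = δ * c) :
    quadRatio δ c (-m / (δ - 2 * m)) = m := by
  have hlead : δ - 2 * m ≠ 0 := by linarith
  rw [quadRatio, div_eq_iff (quadRatio_denom_pos hc _).ne']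
  field_simp
  linear_combination (δ - 2 * m) * hroot

theorem hasDerivAt_quadRatio (hc : 0 < c) (a : ℝ) :
    HasDerivAt (quadRatio δ c)
      ((4 * a * δ * ((2 * a - 1) ^ 2 + c) - (2 * a ^ 2 * δ - c) * (4 * (2 * a - 1)))
        / ((2 * a - 1) ^ 2 + c) ^ 2) a := by
  have hnum : HasDerivAt (fun x : ℝ => 2 * x ^ 2 * δ - c) (4 * a * δ) a :=
    ((((hasDerivAt_pow 2 a).const_mul 2).mul_const δ).sub_const c).congr_deriv (by ring)
  have hlin : HasDerivAt (fun x : ℝ => 2 * x - 1) 2 a := by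
    simpa using ((hasDerivAt_id a).const_mul 2).sub_const 1
  have hden : HasDerivAt (fun x : ℝ => (2 * x - 1) ^ 2 + c) (4 * (2 * a - 1)) a :=
    ((hlin.pow 2).add_const c).congr_deriv (by ring)
  exact hnum.div hden (quadRatio_denom_pos hc a).ne'

theorem deriv_quadRatio_zero (hc : 0 < c) :
    deriv (quadRatio δ c) 0 = -(4 * c / (1 + c) ^ 2) := by
  rw [(hasDerivAt_quadRatio hc 0).deriv]
  ring

theorem deriv_quadRatio_half (hc : 0 < c) :
    deriv (quadRatio δ c) (1 / 2) = 2 * δ / c := by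
  rw [(hasDerivAt_quadRatio hc (1 / 2)).deriv]
  field_simp
  ring

end

open Real in
theorem stmt_11_general (d c δ : ℝ) (hd : 0 < d) (hc0 : 0 < c) (hδ : 0 < δ)
    (F : ℝ → ℝ)
    (hF : ∀ a, F a = 8 * π * d * (1 + (2 * a ^ 2 * δ - c) / ((2 * a - 1) ^ 2 + c))) :
    (∃ a_min : ℝ, 0 < a_min ∧ a_min < 1 / 2 ∧ ∀ a : ℝ, F a_min ≤ F a) ∧
    deriv F 0 < 0 ∧ 0 < deriv F (1 / 2) := by
  have hF' : F = fun a => 8 * π * d * (1 + quadRatio δ c a) := funext hF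
  subst hF'
  have hK : 0 < 8 * π * d := by positivity
  have hderivF : ∀ a, deriv (fun a => 8 * π * d * (1 + quadRatio δ c a)) a
      = 8 * π * d * deriv (quadRatio δ c) a := fun a => by
    rw [(((hasDerivAt_quadRatio hc0 a).const_add 1).const_mul _).deriv,
      (hasDerivAt_quadRatio hc0 a).deriv]
  obtain ⟨m, hm, hroot⟩ := exists_neg_root_of_quadratic (q := -(δ * (1 + c) - 2 * c))
    (by positivity : 0 < 2 * c) (by positivity : 0 < δ * c)
  have hroot' : 2 * c * m ^ 2 - (δ * (1 + c) - 2 * c) * m = δ * c := by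
    linear_combination hroot
  have hlead : 2 * m < δ := by linarith
  refine ⟨⟨-m / (δ - 2 * m), div_pos (by linarith) (by linarith), ?_, fun a => ?_⟩, ?_, ?_⟩
  · rw [div_lt_div_iff₀ (by linarith) two_pos]
    linarith
  · simp only [quadRatio_eq_of_root hc0 hlead hroot']
    gcongr
    exact le_quadRatio hc0 hlead hroot' a
  · rw [hderivF, deriv_quadRatio_zero hc0]
    exact mul_neg_of_pos_of_neg hK (neg_neg_of_pos (by positivity))
  · rw [hderivF, deriv_quadRatio_half hc0]
    positivity

open Real in
theorem stmt_11 (d c δ : ℝ) (hd : 0 < d) (hc0 : 0 < c) (hc1 : c < 1) (hδ : 0 < δ)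
    (F : ℝ → ℝ)
    (hF : ∀ a, F a = 8 * π * d * (1 + (2 * a ^ 2 * δ - c) / ((2 * a - 1) ^ 2 + c))) :
    (∃ a_min : ℝ, 0 < a_min ∧ a_min < 1 / 2 ∧ ∀ a : ℝ, F a_min ≤ F a) ∧
    deriv F 0 < 0 ∧ 0 < deriv F (1 / 2) :=
  stmt_11_general d c δ hd hc0 hδ F hF
end

section
/- The function G(a) = 8π·(1 + (4a² − 1)/((2a−1)² + 1)) defined for real a attains its minimum on the interval [0, 1/2] at a = (3−√5)/4, and the minimum value is G((3−√5)/4) = 4(3−√5)π. -/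
/-! With `m = (1 - √5) / 2`, a root of `x² = x + 1`, the numerator `4a² - 1` exceeds
`m ((2a - 1)² + 1)` by the perfect square `2 (1 + √5) (a - (3 - √5) / 4)²`. Hence
`(4a² - 1) / ((2a - 1)² + 1)` attains its global minimum `m` over `ℝ` at `a = (3 - √5) / 4`,
and `G = 8π (1 + m) = 4 (3 - √5) π` there. -/

open Real

lemma four_sq_sub_one_sub_eq_sq (a : ℝ) :
    4 * a ^ 2 - 1 - (1 - √5) / 2 * ((2 * a - 1) ^ 2 + 1)
      = 2 * (1 + √5) * (a - (3 - √5) / 4) ^ 2 := by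
  linear_combination (5 / 8 - a - √5 / 8) * Real.sq_sqrt (show (0 : ℝ) ≤ 5 by norm_num)

lemma le_div_sq_add_one (a : ℝ) :
    (1 - √5) / 2 ≤ (4 * a ^ 2 - 1) / ((2 * a - 1) ^ 2 + 1) := by
  rw [le_div_iff₀ (by positivity), ← sub_nonneg, four_sq_sub_one_sub_eq_sq]
  positivity

lemma div_sq_add_one_at_min :
    (4 * ((3 - √5) / 4) ^ 2 - 1) / ((2 * ((3 - √5) / 4) - 1) ^ 2 + 1) = (1 - √5) / 2 := by
  rw [div_eq_iff (by positivity), ← sub_eq_zero, four_sq_sub_one_sub_eq_sq]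
  ring

theorem stmt_12 (G : ℝ → ℝ)
    (hG : ∀ a, G a = 8 * π * (1 + (4 * a ^ 2 - 1) / ((2 * a - 1) ^ 2 + 1))) :
    (∀ a ∈ Set.Icc (0 : ℝ) (1 / 2), G ((3 - Real.sqrt 5) / 4) ≤ G a) ∧
    G ((3 - Real.sqrt 5) / 4) = 4 * (3 - Real.sqrt 5) * π := by
  have hmin : G ((3 - √5) / 4) = 8 * π * (1 + (1 - √5) / 2) := by
    rw [hG, div_sq_add_one_at_min]
  refine ⟨fun a _ => ?_, by rw [hmin]; ring⟩
  rw [hmin, hG]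
  gcongr 8 * π * (1 + ?_)
  exact le_div_sq_add_one a
end

section
/- Let (Λ_g) be a sequence of nonnegative reals such that for all sufficiently large g and all a ∈ [0,1/2], Λ_g ≤ 8π·d_g·(1 + (2a²(1 + (g−1)/d_g) − c_{n_g})/((2a−1)² + c_{n_g})), where d_g = g+1 and c_{n_g} = (n_g−1)/(n_g+1) with n_g = ⌊√(g+1)⌋. Then limsup_{g→∞} Λ_g/g ≤ 4(3−√5)π. -/
/-! As `g → ∞` we have `d_g / g → 1`, `(g - 1) / d_g → 1` and, since `n_g = ⌊√(g + 1)⌋ → ∞`,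
`c_{n_g} → 1`. Hence for each fixed `a` the bound on `Λ_g / g` tends to
`8π (1 + (4a² - 1) / ((2a - 1)² + 1))`, which is minimal at `a = (3 - √5) / 4`, where it equals
`4 (3 - √5) π`. -/

open Real Filter Topology

lemma tendsto_sub_one_div_add_one_atTop :
    Tendsto (fun x : ℝ => (x - 1) / (x + 1)) atTop (𝓝 1) := by
  have h : Tendsto (fun x : ℝ => 1 - 2 / (x + 1)) atTop (𝓝 1) := by
    simpa using tendsto_const_nhds.sub
      ((tendsto_atTop_add_const_right _ (1 : ℝ) tendsto_id).const_div_atTop 2)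
  refine h.congr' ?_
  filter_upwards [eventually_ge_atTop 0] with x hx
  field_simp
  ring

lemma tendsto_natSqrt_atTop : Tendsto Nat.sqrt atTop atTop :=
  tendsto_atTop_atTop.mpr fun n => ⟨n * n, fun _ hm => Nat.le_sqrt.mpr hm⟩

lemma tendsto_natCast_add_one_div_atTop :
    Tendsto (fun g : ℕ => ((g : ℝ) + 1) / g) atTop (𝓝 1) := by
  have h : Tendsto (fun g : ℕ => 1 + 1 / (g : ℝ)) atTop (𝓝 1) := by
    simpa using tendsto_const_nhds.add (tendsto_one_div_atTop_nhds_zero_nat (𝕜 := ℝ))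
  refine h.congr' ?_
  filter_upwards [eventually_ge_atTop 1] with g hg
  have : (g : ℝ) ≠ 0 := by positivity
  field_simp

lemma tendsto_bound_div_atTop (a : ℝ) :
    Tendsto (fun g : ℕ => 8 * π * ((g : ℝ) + 1) *
        (1 + (2 * a ^ 2 * (1 + ((g : ℝ) - 1) / ((g : ℝ) + 1))
                - ((Nat.sqrt (g + 1) : ℝ) - 1) / ((Nat.sqrt (g + 1) : ℝ) + 1)) /
             ((2 * a - 1) ^ 2 + ((Nat.sqrt (g + 1) : ℝ) - 1) / ((Nat.sqrt (g + 1) : ℝ) + 1))) / g)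
      atTop (𝓝 (8 * π * (1 + (4 * a ^ 2 - 1) / ((2 * a - 1) ^ 2 + 1)))) := by
  have hc : Tendsto (fun g : ℕ => ((Nat.sqrt (g + 1) : ℝ) - 1) / ((Nat.sqrt (g + 1) : ℝ) + 1))
      atTop (𝓝 1) :=
    tendsto_sub_one_div_add_one_atTop.comp <| tendsto_natCast_atTop_atTop.comp <|
      tendsto_natSqrt_atTop.comp (tendsto_add_atTop_nat 1)
  have hq : Tendsto (fun g : ℕ => ((g : ℝ) - 1) / ((g : ℝ) + 1)) atTop (𝓝 1) :=
    tendsto_sub_one_div_add_one_atTop.comp tendsto_natCast_atTop_atTop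
  have hden : (2 * a - 1) ^ 2 + (1 : ℝ) ≠ 0 := by positivity
  have h : Tendsto (fun g : ℕ => 8 * π * (((g : ℝ) + 1) / g) *
      (1 + (2 * a ^ 2 * (1 + ((g : ℝ) - 1) / ((g : ℝ) + 1))
              - ((Nat.sqrt (g + 1) : ℝ) - 1) / ((Nat.sqrt (g + 1) : ℝ) + 1)) /
           ((2 * a - 1) ^ 2 + ((Nat.sqrt (g + 1) : ℝ) - 1) / ((Nat.sqrt (g + 1) : ℝ) + 1))))
      atTop (𝓝 (8 * π * 1 * (1 + (2 * a ^ 2 * (1 + 1) - 1) / ((2 * a - 1) ^ 2 + 1)))) :=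
    (tendsto_const_nhds.mul tendsto_natCast_add_one_div_atTop).mul <| tendsto_const_nhds.add <|
      ((tendsto_const_nhds.mul (tendsto_const_nhds.add hq)).sub hc).div
        (tendsto_const_nhds.add hc) hden
  convert h using 2
  · ring
  · ring

lemma bound_limit_at_three_sub_sqrt_five_div_four :
    8 * π * (1 + (4 * ((3 - √5) / 4) ^ 2 - 1) / ((2 * ((3 - √5) / 4) - 1) ^ 2 + 1)) =
      4 * (3 - √5) * π := by
  have h5 : √5 ^ 2 = 5 := sq_sqrt (by norm_num)
  have hden : (2 * ((3 - √5) / 4) - 1) ^ 2 + 1 = (5 - √5) / 2 := by nlinarith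
  have hne : 5 - √5 ≠ 0 := by nlinarith [sqrt_nonneg 5]
  rw [hden]
  field_simp
  nlinarith

lemma three_sub_sqrt_five_div_four_mem_Icc : (3 - √5) / 4 ∈ Set.Icc (0 : ℝ) (1 / 2) := by
  have h5 : √5 ^ 2 = 5 := sq_sqrt (by norm_num)
  constructor <;> nlinarith [sqrt_nonneg 5]

open Real Filter in
theorem stmt_14 (Λ : ℕ → ℝ) (hΛ : ∀ g, 0 ≤ Λ g)
    (hbound : ∃ N : ℕ, ∀ g ≥ N, ∀ a ∈ Set.Icc (0 : ℝ) (1 / 2),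
      Λ g ≤ 8 * π * ((g : ℝ) + 1) *
        (1 + (2 * a ^ 2 * (1 + ((g : ℝ) - 1) / ((g : ℝ) + 1))
                - ((Nat.sqrt (g + 1) : ℝ) - 1) / ((Nat.sqrt (g + 1) : ℝ) + 1)) /
             ((2 * a - 1) ^ 2 + ((Nat.sqrt (g + 1) : ℝ) - 1) / ((Nat.sqrt (g + 1) : ℝ) + 1)))) :
    Filter.limsup (fun g : ℕ => Λ g / (g : ℝ)) Filter.atTop ≤ 4 * (3 - Real.sqrt 5) * π := by
  obtain ⟨N, hN⟩ := hbound
  have hlim := tendsto_bound_div_atTop ((3 - √5) / 4)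
  rw [bound_limit_at_three_sub_sqrt_five_div_four] at hlim
  have hle : ∀ᶠ g in atTop, Λ g / g ≤ _ :=
    (eventually_ge_atTop N).mono fun g hg =>
      div_le_div_of_nonneg_right (hN g hg _ three_sub_sqrt_five_div_four_mem_Icc) g.cast_nonneg
  have hcobdd : IsCoboundedUnder (· ≤ ·) atTop (fun g : ℕ => Λ g / g) :=
    isCoboundedUnder_le_of_le atTop fun g => div_nonneg (hΛ g) g.cast_nonneg
  exact (limsup_le_limsup hle hcobdd hlim.isBoundedUnder_le).trans_eq hlim.limsup_eq
end
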